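/- Let s > 0 with 2s > d. There exists a constant C > 0 such that every Schwartz function f : ℝ^d → ℂ satisfies ‖f‖_{C^0} ≤ C ‖f‖_{H^s}, where ‖f‖_{H^s}^2 = ∫_{ℝ^d} (1 + |ξ|^{2s}) |𝓕f(ξ)|^2 dξ and ‖f‖_{C^0} is the supremum norm. -/

import Mathlib

/-!
By Fourier inversion, `‖f x‖ ≤ ∫ ‖𝓕 f‖`, and after the change of variables relating Mathlib's
Fourier transform to `fourierTr` this is a multiple of `∫ ‖fourierTr f‖`. Writing
`w ξ = 1 + ‖ξ‖ ^ (2 s)`, Cauchy–Schwarz bounds `∫ ‖fourierTr f‖` by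
`√(∫ w⁻¹) · √(∫ w ‖fourierTr f‖²)`, and `w⁻¹` is integrable because `2 s > d`.
-/

open MeasureTheory Real

/-- Fourier transform with the normalization `𝓕f(ξ) = (2π)^{-d/2} ∫ e^{-i x·ξ} f(x) dx`. -/
noncomputable def fourierTr {d : ℕ} (f : EuclideanSpace ℝ (Fin d) → ℂ)
    (ξ : EuclideanSpace ℝ (Fin d)) : ℂ :=
  ((((2 * π : ℝ) ^ (-(d : ℝ) / 2) : ℝ)) : ℂ) *
    ∫ x : EuclideanSpace ℝ (Fin d), Complex.exp (-Complex.I * ((inner ℝ x ξ : ℝ) : ℂ)) * f x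

open scoped FourierTransform SchwartzMap

theorem Real.one_add_rpow_le_two_rpow_mul {t r : ℝ} (ht : 0 ≤ t) (hr : 0 ≤ r) :
    (1 + t) ^ r ≤ 2 ^ r * (1 + t ^ r) := calc
  (1 + t) ^ r ≤ (2 * max 1 t) ^ r := by gcongr; rw [two_mul]; gcongr <;> simp
  _ = 2 ^ r * max 1 (t ^ r) := by
    rw [mul_rpow zero_le_two (by positivity), rpow_max zero_le_one ht hr, one_rpow]
  _ ≤ 2 ^ r * (1 + t ^ r) := by gcongr; exact max_le_add_of_nonneg zero_le_one (by positivity)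

theorem Real.one_add_rpow_le_two_add_pow_ceil {t r : ℝ} (ht : 0 ≤ t) (hr : 0 ≤ r) :
    1 + t ^ r ≤ 2 + t ^ ⌈r⌉₊ := by
  rcases le_total t 1 with h | h
  · linarith [rpow_le_one ht h hr, pow_nonneg ht ⌈r⌉₊]
  · linarith [rpow_natCast t ⌈r⌉₊ ▸ rpow_le_rpow_of_exponent_le h (Nat.le_ceil r)]

section

variable {E : Type*} [NormedAddCommGroup E] [InnerProductSpace ℝ E] [FiniteDimensional ℝ E]
  [MeasurableSpace E] [BorelSpace E]

theorem integrable_inv_one_add_norm_rpow {r : ℝ} (hr : (Module.finrank ℝ E : ℝ) < r) :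
    Integrable (fun ξ : E ↦ (1 + ‖ξ‖ ^ r)⁻¹) := by
  have hr0 : 0 ≤ r := (Nat.cast_nonneg _).trans hr.le
  refine ((integrable_one_add_norm hr).const_mul (2 ^ r)).mono'
    ((continuous_const.add (continuous_norm.rpow_const fun _ ↦ Or.inr hr0)).inv₀
      fun ξ ↦ (by positivity : 0 < 1 + ‖ξ‖ ^ r).ne').aestronglyMeasurable (.of_forall fun ξ ↦ ?_)
  rw [norm_inv, Real.norm_of_nonneg (by positivity), rpow_neg (by positivity),
    ← div_eq_mul_inv, le_div_iff₀ (by positivity), inv_mul_le_iff₀ (by positivity), mul_comm]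
  exact one_add_rpow_le_two_rpow_mul (norm_nonneg ξ) hr0

end

namespace SchwartzMap

variable {E F : Type*} [NormedAddCommGroup E] [NormedSpace ℝ E] [MeasurableSpace E] [BorelSpace E]
  [SecondCountableTopology E] [NormedAddCommGroup F] [NormedSpace ℝ F]
  {μ : Measure E} [μ.HasTemperateGrowth]

theorem integrable_one_add_norm_rpow_mul (f : 𝓢(E, F)) {r : ℝ} (hr : 0 ≤ r) :
    Integrable (fun x ↦ (1 + ‖x‖ ^ r) * ‖f x‖) μ := by
  refine (((f.integrable (μ := μ)).norm.const_mul 2).add (f.integrable_pow_mul μ ⌈r⌉₊)).mono'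
    ((continuous_const.add (continuous_norm.rpow_const fun _ ↦ Or.inr hr)).mul
      f.continuous.norm).aestronglyMeasurable (.of_forall fun x ↦ ?_)
  rw [Real.norm_of_nonneg (by positivity), Pi.add_apply, ← add_mul]
  exact mul_le_mul_of_nonneg_right (one_add_rpow_le_two_add_pow_ceil (norm_nonneg x) hr)
    (norm_nonneg _)

theorem integrable_one_add_norm_rpow_mul_norm_sq (f : 𝓢(E, F)) {r : ℝ} (hr : 0 ≤ r) :
    Integrable (fun x ↦ (1 + ‖x‖ ^ r) * ‖f x‖ ^ 2) μ := by
  refine ((f.integrable_one_add_norm_rpow_mul hr).const_mul (SchwartzMap.seminorm ℝ 0 0 f)).mono'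
    ((continuous_const.add (continuous_norm.rpow_const fun _ ↦ Or.inr hr)).mul
      (f.continuous.norm.pow 2)).aestronglyMeasurable (.of_forall fun x ↦ ?_)
  rw [Real.norm_of_nonneg (by positivity), sq, ← mul_assoc, mul_comm _ ((1 + ‖x‖ ^ r) * ‖f x‖)]
  gcongr
  exact f.norm_le_seminorm ℝ x

end SchwartzMap

theorem integral_le_sqrt_integral_inv_mul_sqrt_integral_mul_sq {α : Type*} [MeasurableSpace α]
    {μ : Measure α} {w φ : α → ℝ} (hw : ∀ x, 0 < w x) (hφ : ∀ x, 0 ≤ φ x)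
    (hw_meas : AEStronglyMeasurable w μ) (hφ_meas : AEStronglyMeasurable φ μ)
    (hw_inv : Integrable (fun x ↦ (w x)⁻¹) μ) (hwφ : Integrable (fun x ↦ w x * φ x ^ 2) μ) :
    ∫ x, φ x ∂μ ≤ √(∫ x, (w x)⁻¹ ∂μ) * √(∫ x, w x * φ x ^ 2 ∂μ) := by
  set u : α → ℝ := fun x ↦ √(w x)⁻¹
  set v : α → ℝ := fun x ↦ √(w x) * φ x
  have huv : ∀ x, u x * v x = φ x := fun x ↦ by
    rw [← mul_assoc, ← sqrt_mul (inv_nonneg.2 (hw x).le), inv_mul_cancel₀ (hw x).ne', sqrt_one,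
      one_mul]
  have hu_sq : ∀ x, u x ^ 2 = (w x)⁻¹ := fun x ↦ by
    rw [sq_sqrt (inv_nonneg.2 (hw x).le)]
  have hv_sq : ∀ x, v x ^ 2 = w x * φ x ^ 2 := fun x ↦ by
    rw [mul_pow, sq_sqrt (hw x).le]
  have hu : MemLp u (ENNReal.ofReal 2) μ := by
    rw [ENNReal.ofReal_ofNat, memLp_two_iff_integrable_sq
      (continuous_sqrt.comp_aestronglyMeasurable hw_inv.1)]
    exact hw_inv.congr (.of_forall fun x ↦ (hu_sq x).symm)
  have hv_meas : AEStronglyMeasurable v μ :=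
    (continuous_sqrt.comp_aestronglyMeasurable hw_meas).mul hφ_meas
  have hv : MemLp v (ENNReal.ofReal 2) μ := by
    rw [ENNReal.ofReal_ofNat, memLp_two_iff_integrable_sq hv_meas]
    exact hwφ.congr (.of_forall fun x ↦ (hv_sq x).symm)
  have holder := integral_mul_le_Lp_mul_Lq_of_nonneg HolderConjugate.two_two
    (.of_forall fun x ↦ sqrt_nonneg _) (.of_forall fun x ↦ mul_nonneg (sqrt_nonneg _) (hφ x)) hu hv
  simp only [rpow_two] at holder
  rwa [integral_congr_ae (.of_forall huv), integral_congr_ae (.of_forall hu_sq),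
    integral_congr_ae (.of_forall hv_sq), ← sqrt_eq_rpow, ← sqrt_eq_rpow] at holder

theorem norm_le_integral_norm_fourier {V E : Type*} [NormedAddCommGroup V] [InnerProductSpace ℝ V]
    [FiniteDimensional ℝ V] [MeasurableSpace V] [BorelSpace V] [NormedAddCommGroup E]
    [NormedSpace ℂ E] [CompleteSpace E] {f : V → E} (hf_cont : Continuous f)
    (hf : Integrable f) (hf' : Integrable (𝓕 f)) (x : V) :
    ‖f x‖ ≤ ∫ ξ, ‖𝓕 f ξ‖ := by
  conv_lhs => rw [← hf_cont.fourierInv_fourier_eq hf hf', Real.fourierInv_eq]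
  refine (norm_integral_le_integral_norm _).trans_eq (integral_congr_ae (.of_forall fun ξ ↦ ?_))
  simp

section FourierTr

variable {d : ℕ}

theorem fourierTr_eq (f : EuclideanSpace ℝ (Fin d) → ℂ) (ξ : EuclideanSpace ℝ (Fin d)) :
    fourierTr f ξ = (((2 * π) ^ (-(d : ℝ) / 2) : ℝ) : ℂ) * 𝓕 f ((2 * π)⁻¹ • ξ) := by
  rw [fourierTr, Real.fourier_eq']
  congr 1
  refine integral_congr_ae (.of_forall fun x ↦ ?_)
  have h2π : (2 * π : ℝ) ≠ 0 := by positivity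
  simp only [smul_eq_mul]
  rw [real_inner_smul_right,
    show -2 * π * ((2 * π)⁻¹ * inner ℝ x ξ) = -inner ℝ x ξ by field_simp]
  push_cast
  ring_nf

theorem integral_norm_fourier_eq (f : EuclideanSpace ℝ (Fin d) → ℂ) :
    ∫ ξ, ‖𝓕 f ξ‖ = (2 * π) ^ (-(d : ℝ) / 2) * ∫ ξ, ‖fourierTr f ξ‖ := by
  have h2π : (0 : ℝ) < 2 * π := by positivity
  simp_rw [fourierTr_eq, norm_mul, Complex.norm_real, norm_of_nonneg (rpow_nonneg h2π.le _)]
  rw [integral_const_mul, Measure.integral_comp_smul volume (fun ξ ↦ ‖𝓕 f ξ‖),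
    finrank_euclideanSpace_fin, smul_eq_mul, inv_pow, inv_inv, abs_of_pos (pow_pos h2π d),
    ← mul_assoc, ← mul_assoc, ← rpow_natCast, ← rpow_add h2π, ← rpow_add h2π,
    show -(d : ℝ) / 2 + -(d : ℝ) / 2 + d = 0 by ring, rpow_zero, one_mul]

theorem exists_schwartzMap_eq_fourierTr (f : 𝓢(EuclideanSpace ℝ (Fin d), ℂ)) :
    ∃ g : 𝓢(EuclideanSpace ℝ (Fin d), ℂ), ⇑g = fourierTr ⇑f := by
  have h2π : (2 * π)⁻¹ ≠ 0 := by positivity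
  refine ⟨(((2 * π) ^ (-(d : ℝ) / 2) : ℝ) : ℂ) • SchwartzMap.compCLMOfContinuousLinearEquiv ℂ
    (LinearEquiv.smulOfNeZero ℝ _ _ h2π).toContinuousLinearEquiv (𝓕 f), funext fun ξ ↦ ?_⟩
  simp [fourierTr_eq, SchwartzMap.fourier_coe]

end FourierTr

theorem stmt_3_general (d : ℕ) (s : ℝ) (hds : (d : ℝ) < 2 * s) :
    ∃ C > (0 : ℝ), ∀ f : SchwartzMap (EuclideanSpace ℝ (Fin d)) ℂ,
      ∀ x : EuclideanSpace ℝ (Fin d),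
        ‖f x‖ ≤ C * Real.sqrt (∫ ξ : EuclideanSpace ℝ (Fin d),
          (1 + ‖ξ‖ ^ (2 * s)) * ‖fourierTr (⇑f) ξ‖ ^ 2) := by
  have hdim : (Module.finrank ℝ (EuclideanSpace ℝ (Fin d)) : ℝ) < 2 * s := by
    rwa [finrank_euclideanSpace_fin]
  have hs : 0 ≤ 2 * s := (Nat.cast_nonneg d).trans hds.le
  set A := ∫ ξ : EuclideanSpace ℝ (Fin d), (1 + ‖ξ‖ ^ (2 * s))⁻¹
  refine ⟨(2 * π) ^ (-(d : ℝ) / 2) * (√A + 1), by positivity, fun f x ↦ ?_⟩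
  obtain ⟨g, hg⟩ := exists_schwartzMap_eq_fourierTr f
  have hCS := integral_le_sqrt_integral_inv_mul_sqrt_integral_mul_sq (μ := volume)
    (w := fun ξ ↦ 1 + ‖ξ‖ ^ (2 * s)) (fun ξ ↦ by positivity) (fun ξ ↦ norm_nonneg (g ξ))
    (continuous_const.add (continuous_norm.rpow_const fun _ ↦ Or.inr hs)).aestronglyMeasurable
    g.continuous.norm.aestronglyMeasurable (integrable_inv_one_add_norm_rpow hdim)
    (g.integrable_one_add_norm_rpow_mul_norm_sq hs)
  rw [hg] at hCS
  set c := (2 * π) ^ (-(d : ℝ) / 2)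
  set I := ∫ ξ, (1 + ‖ξ‖ ^ (2 * s)) * ‖fourierTr (⇑f) ξ‖ ^ 2
  calc ‖f x‖ ≤ ∫ ξ, ‖𝓕 (⇑f) ξ‖ := norm_le_integral_norm_fourier f.continuous f.integrable
        (SchwartzMap.fourier_coe f ▸ (𝓕 f).integrable) x
    _ = c * ∫ ξ, ‖fourierTr (⇑f) ξ‖ := integral_norm_fourier_eq _
    _ ≤ c * (√A * √I) := by gcongr
    _ ≤ c * (√A + 1) * √I := by rw [mul_assoc]; gcongr; linarith

theorem stmt_3 (d : ℕ) (s : ℝ) (hs : 0 < s) (hds : (d : ℝ) < 2 * s) :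
    ∃ C > (0 : ℝ), ∀ f : SchwartzMap (EuclideanSpace ℝ (Fin d)) ℂ,
      ∀ x : EuclideanSpace ℝ (Fin d),
        ‖f x‖ ≤ C * Real.sqrt (∫ ξ : EuclideanSpace ℝ (Fin d),
          (1 + ‖ξ‖ ^ (2 * s)) * ‖fourierTr (⇑f) ξ‖ ^ 2) :=
  stmt_3_general d s hds
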